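/- arXiv:1507.02351 — 4 statements merged into one kernel-verified Lean document; each statement's English description precedes it below -/
import Mathlib

section
/- Let f : 2^N → ℝ≥0 be a monotone submodular set function on a finite ground set N, let T ⊆ N, and define the marginal f_T(A) = f(T ∪ A) − f(T). Suppose O ⊆ N with |O| > 1/ε for some ε > 0, and let B ⊆ O be a set of at most ⌈1/ε⌉ elements of O chosen greedily to maximize marginal value (equivalently, any B ⊆ O with |B| = ⌈1/ε⌉ and f_T(B) ≥ (|B|/|O|)·f_T(O)). Then f_T(B)/(1+|B|) ≥ (1−ε)·f_T(O)/(1+|O|). -/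
/-! Writing `F = f_T(O)` and `G = f_T(B)`, the hypothesis gives `G ≥ (|B|/|O|) F`, so it suffices
that `(1 - ε) / (1 + |O|) ≤ |B| / (|O| (1 + |B|))`. Cleared of denominators this is
`(1 - ε) |O| (1 + |B|) ≤ |B| (1 + |O|)`, which follows from `ε |B| ≥ 1` since `|B| = ⌈1/ε⌉`;
monotonicity supplies `F ≥ 0`. -/

lemma one_sub_div_one_add_le_div_div_one_add {ε b o : ℝ} (hε : 0 ≤ ε) (hεb : 1 ≤ ε * b)
    (ho : 0 < o) : (1 - ε) / (1 + o) ≤ b / o / (1 + b) := by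
  have hb : 0 < b := pos_of_mul_pos_right (by linarith) hε
  rw [div_div, div_le_div_iff₀ (by positivity) (by positivity)]
  nlinarith [mul_nonneg hε ho.le]

lemma one_le_mul_natCeil_one_div {ε : ℝ} (hε : 0 < ε) : 1 ≤ ε * ⌈1 / ε⌉₊ := by
  have := mul_le_mul_of_nonneg_left (Nat.le_ceil (1 / ε)) hε.le
  rwa [mul_one_div_cancel hε.ne'] at this

lemma union_sub_nonneg_of_mono {N : Type*} [DecidableEq N] {f : Finset N → ℝ}
    (hmono : ∀ S T : Finset N, S ⊆ T → f S ≤ f T) (T A : Finset N) : 0 ≤ f (T ∪ A) - f T :=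
  sub_nonneg.mpr (hmono T (T ∪ A) Finset.subset_union_left)

theorem stmt_0_general {N : Type*} [DecidableEq N]
    (f : Finset N → ℝ)
    (hmono : ∀ S T : Finset N, S ⊆ T → f S ≤ f T)
    (T O B : Finset N) (ε : ℝ) (hε : 0 < ε)
    (hO : (1 : ℝ) / ε < O.card)
    (hBcard : B.card = ⌈1 / ε⌉₊)
    (hBval : (B.card : ℝ) / O.card * (f (T ∪ O) - f T) ≤ f (T ∪ B) - f T) :
    (1 - ε) * (f (T ∪ O) - f T) / (1 + O.card) ≤ (f (T ∪ B) - f T) / (1 + B.card) := by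
  have hεB : 1 ≤ ε * B.card := hBcard ▸ one_le_mul_natCeil_one_div hε
  have hOpos : (0 : ℝ) < O.card := lt_trans (by positivity) hO
  calc (1 - ε) * (f (T ∪ O) - f T) / (1 + O.card)
      = (1 - ε) / (1 + O.card) * (f (T ∪ O) - f T) := by ring
    _ ≤ (B.card : ℝ) / O.card / (1 + B.card) * (f (T ∪ O) - f T) :=
        mul_le_mul_of_nonneg_right (one_sub_div_one_add_le_div_div_one_add hε.le hεB hOpos)
          (union_sub_nonneg_of_mono hmono T O)
    _ = (B.card : ℝ) / O.card * (f (T ∪ O) - f T) / (1 + B.card) := by ring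
    _ ≤ (f (T ∪ B) - f T) / (1 + B.card) := by gcongr

/-- density of a greedily chosen small block approximates the density
of the full block, for monotone submodular `f`. -/
theorem stmt_0 {N : Type*} [DecidableEq N] [Fintype N]
    (f : Finset N → ℝ)
    (hnn : ∀ S, 0 ≤ f S)
    (hmono : ∀ S T : Finset N, S ⊆ T → f S ≤ f T)
    (hsub : ∀ S T : Finset N, f (S ∪ T) + f (S ∩ T) ≤ f S + f T)
    (T O B : Finset N) (ε : ℝ) (hε : 0 < ε)
    (hO : (1 : ℝ) / ε < O.card)
    (hBO : B ⊆ O) (hBcard : B.card = ⌈1 / ε⌉₊)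
    (hBval : (B.card : ℝ) / O.card * (f (T ∪ O) - f T) ≤ f (T ∪ B) - f T) :
    (1 - ε) * (f (T ∪ O) - f T) / (1 + O.card) ≤ (f (T ∪ B) - f T) / (1 + B.card) :=
  stmt_0_general f hmono T O B ε hε hO hBcard hBval
end

section
/- Let f : 2^N → ℝ≥0 be a submodular set function, T ⊆ N, and O ⊆ N with |O| ≥ m ≥ 1. Then there exists a subset B ⊆ O with |B| = m such that f_T(B) ≥ (m/|O|)·f_T(O), where f_T(A) = f(T ∪ A) − f(T). -/
/-!
Summing the losses `f (T ∪ O) - f (T ∪ O.erase x)` over `x ∈ O` telescopes, by submodularity,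
to at most `f (T ∪ O) - f T`; so some element costs at most a `1 / |O|` fraction of the
marginal value, and removing it keeps the ratio `f_T(A) / |A|` from decreasing. Removing
elements one at a time down to `m` gives the claim.
-/

open Finset

def IsSubmodular {N : Type*} [DecidableEq N] (f : Finset N → ℝ) : Prop :=
  ∀ S T : Finset N, f (S ∪ T) + f (S ∩ T) ≤ f S + f T

section Submodular

variable {N : Type*} [DecidableEq N] {f : Finset N → ℝ}

theorem sum_erase_marginal_le (hf : IsSubmodular f) (T O : Finset N) :
    ∑ x ∈ O, (f (T ∪ O) - f (T ∪ O.erase x)) ≤ f (T ∪ O) - f T := by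
  induction O using Finset.induction_on with
  | empty => simp
  | insert a O ha ih =>
    have hterm : ∀ x ∈ O, f (T ∪ insert a O) - f (T ∪ (insert a O).erase x)
        ≤ f (T ∪ O) - f (T ∪ O.erase x) := by
      intro x hx
      have h := hf (T ∪ (insert a O).erase x) (T ∪ O)
      have hunion : T ∪ (insert a O).erase x ∪ (T ∪ O) = T ∪ insert a O := by
        ext y; simp only [mem_union, mem_erase, mem_insert]; grind
      have hinter : (T ∪ (insert a O).erase x) ∩ (T ∪ O) = T ∪ O.erase x := by
        ext y; simp only [mem_union, mem_inter, mem_erase, mem_insert]; grind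
      rw [hunion, hinter] at h
      linarith
    rw [sum_insert ha, erase_insert ha]
    linarith [sum_le_sum hterm]

theorem exists_erase_marginal_le (hf : IsSubmodular f) (T : Finset N) {O : Finset N}
    (hO : O.Nonempty) :
    ∃ x ∈ O, f (T ∪ O) - f (T ∪ O.erase x) ≤ (f (T ∪ O) - f T) / #O := by
  refine exists_le_of_sum_le hO ?_
  rw [sum_const, nsmul_eq_mul, mul_div_cancel₀ _ (by positivity)]
  exact sum_erase_marginal_le hf T O

theorem exists_subset_card_eq_marginal_ge (hf : IsSubmodular f) (T O : Finset N) {m : ℕ}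
    (hm : m ≤ #O) :
    ∃ B ⊆ O, #B = m ∧ (m : ℝ) / #O * (f (T ∪ O) - f T) ≤ f (T ∪ B) - f T := by
  induction hm using Nat.decreasingInduction with
  | self =>
    refine ⟨O, subset_rfl, rfl, ?_⟩
    rcases O.eq_empty_or_nonempty with rfl | hO
    · simp
    · rw [div_self (by positivity), one_mul]
  | of_succ k hk ih =>
    obtain ⟨B, hBO, hBk, hB⟩ := ih
    obtain ⟨x, hxB, hx⟩ := exists_erase_marginal_le hf T (card_pos.mp (by omega : 0 < #B))
    refine ⟨B.erase x, (erase_subset x B).trans hBO, by rw [card_erase_of_mem hxB, hBk]; rfl, ?_⟩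
    rw [hBk] at hx
    push_cast at hB hx
    calc (k : ℝ) / #O * (f (T ∪ O) - f T)
        = k / (k + 1) * ((k + 1) / #O * (f (T ∪ O) - f T)) := by field_simp
      _ ≤ k / (k + 1) * (f (T ∪ B) - f T) := by gcongr
      _ = f (T ∪ B) - f T - (f (T ∪ B) - f T) / (k + 1) := by field_simp; ring
      _ ≤ f (T ∪ B.erase x) - f T := by linarith

end Submodular

theorem stmt_1_general {N : Type*} [DecidableEq N]
    (f : Finset N → ℝ)
    (hsub : ∀ S T : Finset N, f (S ∪ T) + f (S ∩ T) ≤ f S + f T)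
    (T O : Finset N) (m : ℕ) (hmO : m ≤ O.card) :
    ∃ B ⊆ O, B.card = m ∧
      (m : ℝ) / O.card * (f (T ∪ O) - f T) ≤ f (T ∪ B) - f T :=
  exists_subset_card_eq_marginal_ge hsub T O hmO

/-- averaging/truncation lemma: there is an `m`-subset of `O`
capturing an `m/|O|` fraction of the marginal value. -/
theorem stmt_1 {N : Type*} [DecidableEq N]
    (f : Finset N → ℝ)
    (hnn : ∀ S, 0 ≤ f S)
    (hsub : ∀ S T : Finset N, f (S ∪ T) + f (S ∩ T) ≤ f S + f T)
    (T O : Finset N) (m : ℕ) (hm : 1 ≤ m) (hmO : m ≤ O.card) :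
    ∃ B ⊆ O, B.card = m ∧
      (m : ℝ) / O.card * (f (T ∪ O) - f T) ≤ f (T ∪ B) - f T :=
  stmt_1_general f hsub T O m hmO
end

section
/- Let G = (V, E) be a finite graph and define f : 2^V → ℝ by f(T) = 1 if T contains both endpoints of some edge of G, and f(T) = 1 − 2^{−|T|} otherwise. Then f is monotone and submodular. -/
/-!
Write `f = 1 - w`, where `w T = 2^{-|T|}` if `T` is independent in `G` and `w T = 0` otherwise.
Independent sets form a lower set, and for any lower set `𝓕` and any ratio `0 ≤ r ≤ 1/2` the
weight `T ↦ [T ∈ 𝓕] r^{|T|}` is antitone and supermodular: the only delicate case is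
when `insert a T` leaves `𝓕` while `insert a S` does not, where `S ⊊ T` gives
`r^{|T|} ≤ r^{|S|+1} ≤ r^{|S|} (1 - r)`, using `r ≤ 1/2`.
-/

open scoped Classical

open Finset

namespace Finset

variable {α : Type*} {𝓕 : Set (Finset α)} {r : ℝ}

noncomputable def geomWeightOn (𝓕 : Set (Finset α)) (r : ℝ) (T : Finset α) : ℝ :=
  if T ∈ 𝓕 then r ^ T.card else 0

lemma geomWeightOn_of_mem {T : Finset α} (hT : T ∈ 𝓕) : geomWeightOn 𝓕 r T = r ^ T.card :=
  if_pos hT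

lemma geomWeightOn_of_notMem {T : Finset α} (hT : T ∉ 𝓕) : geomWeightOn 𝓕 r T = 0 :=
  if_neg hT

lemma geomWeightOn_antitone (h𝓕 : IsLowerSet 𝓕) (hr₀ : 0 ≤ r) (hr₁ : r ≤ 1) :
    Antitone (geomWeightOn 𝓕 r) := by
  intro S T hST
  by_cases hT : T ∈ 𝓕
  · rw [geomWeightOn_of_mem hT, geomWeightOn_of_mem (h𝓕 hST hT)]
    exact pow_le_pow_of_le_one hr₀ hr₁ (card_le_card hST)
  · rw [geomWeightOn_of_notMem hT]
    unfold geomWeightOn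
    split_ifs <;> positivity

variable [DecidableEq α]

lemma geomWeightOn_sub_insert_le (h𝓕 : IsLowerSet 𝓕) (hr₀ : 0 ≤ r) (hr : r ≤ 1 / 2)
    {S T : Finset α} (hST : S ⊆ T) {a : α} (haT : a ∉ T) :
    geomWeightOn 𝓕 r T - geomWeightOn 𝓕 r (insert a T) ≤
      geomWeightOn 𝓕 r S - geomWeightOn 𝓕 r (insert a S) := by
  have hr₁ : r ≤ 1 := by linarith
  have hS_le_T : S.card ≤ T.card := card_le_card hST
  have hcardS : (insert a S).card = S.card + 1 := card_insert_of_notMem fun h ↦ haT (hST h)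
  have hcardT : (insert a T).card = T.card + 1 := card_insert_of_notMem haT
  by_cases hT : T ∈ 𝓕
  swap
  · rw [geomWeightOn_of_notMem hT,
      geomWeightOn_of_notMem fun h ↦ hT (h𝓕 (subset_insert a T) h), sub_zero, sub_nonneg]
    exact geomWeightOn_antitone h𝓕 hr₀ hr₁ (subset_insert a S)
  rw [geomWeightOn_of_mem hT, geomWeightOn_of_mem (h𝓕 hST hT)]
  have hpow : r ^ T.card ≤ r ^ S.card := pow_le_pow_of_le_one hr₀ hr₁ hS_le_T
  by_cases haT𝓕 : insert a T ∈ 𝓕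
  · have haS𝓕 : insert a S ∈ 𝓕 := h𝓕 (insert_subset_insert a hST) haT𝓕
    rw [geomWeightOn_of_mem haT𝓕, geomWeightOn_of_mem haS𝓕, hcardS, hcardT, pow_succ, pow_succ]
    nlinarith
  rw [geomWeightOn_of_notMem haT𝓕, sub_zero]
  by_cases haS𝓕 : insert a S ∈ 𝓕
  · have hS_lt_T : S.card < T.card :=
      card_lt_card (ssubset_of_subset_of_ne hST fun hST_eq ↦ haT𝓕 (hST_eq ▸ haS𝓕))
    have hpow_succ : r ^ T.card ≤ r ^ S.card * r := pow_succ r S.card ▸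
      pow_le_pow_of_le_one hr₀ hr₁ hS_lt_T
    rw [geomWeightOn_of_mem haS𝓕, hcardS, pow_succ]
    nlinarith [pow_nonneg hr₀ S.card]
  · rwa [geomWeightOn_of_notMem haS𝓕, sub_zero]

end Finset

lemma SimpleGraph.isLowerSet_setOf_not_exists_adj {V : Type*} (G : SimpleGraph V) :
    IsLowerSet {T : Finset V | ¬ ∃ u v, G.Adj u v ∧ u ∈ T ∧ v ∈ T} :=
  fun _ _ hST hT ⟨u, v, huv, hu, hv⟩ ↦ hT ⟨u, v, huv, hST hu, hST hv⟩

/-- the function equal to `1` on sets containing an edge and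
`1 - 2^{-|T|}` otherwise is monotone and submodular (diminishing returns). -/
theorem stmt_4 {V : Type*} [DecidableEq V] [Fintype V] (G : SimpleGraph V)
    (f : Finset V → ℝ)
    (hf : ∀ T : Finset V,
      f T = if ∃ u v, G.Adj u v ∧ u ∈ T ∧ v ∈ T then 1
            else 1 - (2 : ℝ) ^ (-(T.card : ℤ))) :
    (∀ S T : Finset V, S ⊆ T → f S ≤ f T) ∧
    (∀ S T : Finset V, S ⊆ T → ∀ a ∉ T,
      f (insert a T) - f T ≤ f (insert a S) - f S) := by
  set 𝓕 := {T : Finset V | ¬ ∃ u v, G.Adj u v ∧ u ∈ T ∧ v ∈ T}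
  have hf_eq : ∀ T, f T = 1 - geomWeightOn 𝓕 2⁻¹ T := by
    intro T
    rw [hf]
    by_cases hT : ∃ u v, G.Adj u v ∧ u ∈ T ∧ v ∈ T
    · rw [if_pos hT, geomWeightOn_of_notMem (not_not_intro hT), sub_zero]
    · rw [if_neg hT, geomWeightOn_of_mem hT, zpow_neg, zpow_natCast, inv_pow]
  have h𝓕 := G.isLowerSet_setOf_not_exists_adj
  refine ⟨fun S T hST ↦ ?_, fun S T hST a haT ↦ ?_⟩
  · have := geomWeightOn_antitone h𝓕 (r := 2⁻¹) (by norm_num) (by norm_num) hST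
    rw [hf_eq, hf_eq]
    linarith
  · have := geomWeightOn_sub_insert_le h𝓕 (r := 2⁻¹) (by norm_num) (by norm_num) hST haT
    rw [hf_eq, hf_eq, hf_eq, hf_eq]
    linarith
end

section
/- Let f : 2^N → ℝ≥0 be a monotone submodular function on a finite ground set N = {1,…,n}, and let q ∈ [0,1]^n with max_i q_i ≤ δ. Let μ be the product distribution where element i is included independently with probability q_i, and ν the product distribution where element i is included independently with probability 1 − e^{−q_i}. Then E_{T∼ν}[f(T)] ≥ ((1 − e^{−δ})/δ) · E_{T∼μ}[f(T)]. -/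
/-!
Write `F_x(g) = E[g(T)]` for the random set `T` containing each element `i` independently with
probability `x i`. For monotone submodular `g` and `0 ≤ c ≤ 1`, whenever `c • q ≤ p` coordinatewise
we have `c F_q(g) + (1 - c) g(∅) ≤ F_p(g)`; this follows by conditioning on one element at a time:
monotonicity lets us lower `p` to `c • q`, and submodularity (diminishing returns of the marginal
gain of that element) handles the remaining mixture. The theorem is the case
`c = (1 - e^{-δ})/δ`, `p i = 1 - e^{-q i}`, where `c q i ≤ p i` is concavity of `t ↦ 1 - e^{-t}`
on `[0, δ]`, and `f ∅ ≥ 0` lets us drop the term `(1 - c) f ∅`.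
-/

open Finset Real

namespace Finset

variable {α : Type*} [DecidableEq α]

def IsSubmodular (g : Finset α → ℝ) : Prop :=
  ∀ S T, g (S ∪ T) + g (S ∩ T) ≤ g S + g T

theorem IsSubmodular.comp_insert {g : Finset α → ℝ} (hg : IsSubmodular g) (a : α) :
    IsSubmodular fun T => g (insert a T) := by
  intro S T
  simpa only [insert_union_distrib, insert_inter_distrib] using hg (insert a S) (insert a T)

theorem IsSubmodular.add_insert_le {g : Finset α → ℝ} (hg : IsSubmodular g) (hmono : Monotone g)
    (a : α) (T : Finset α) : g (insert a T) + g ∅ ≤ g {a} + g T := by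
  have h := hg {a} T
  rw [← insert_eq] at h
  linarith [hmono (empty_subset ({a} ∩ T))]

def multilinearExt (s : Finset α) (x : α → ℝ) (g : Finset α → ℝ) : ℝ :=
  ∑ T ∈ s.powerset, (∏ i ∈ T, x i) * (∏ i ∈ s \ T, (1 - x i)) * g T

theorem multilinearExt_insert {s : Finset α} {a : α} (ha : a ∉ s) (x : α → ℝ)
    (g : Finset α → ℝ) :
    multilinearExt (insert a s) x g =
      (1 - x a) * multilinearExt s x g + x a * multilinearExt s x (fun T => g (insert a T)) := by
  simp only [multilinearExt, sum_powerset_insert ha, mul_sum]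
  congr 1 <;> refine sum_congr rfl fun T hT => ?_
  · have haT : a ∉ s \ T := fun h => ha (mem_sdiff.mp h).1
    rw [insert_sdiff_of_notMem s (fun h => ha (mem_powerset.mp hT h)), prod_insert haT]
    ring
  · have haT : a ∉ T := fun h => ha (mem_powerset.mp hT h)
    rw [insert_sdiff_insert, sdiff_insert_of_notMem ha, prod_insert haT]
    ring

theorem multilinearExt_add_const (s : Finset α) (x : α → ℝ) (g : Finset α → ℝ) (b : ℝ) :
    multilinearExt s x (fun T => g T + b) = multilinearExt s x g + b := by
  have hweights : ∑ T ∈ s.powerset, (∏ i ∈ T, x i) * ∏ i ∈ s \ T, (1 - x i) = 1 := by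
    rw [← prod_add]
    simp
  simp only [multilinearExt, mul_add, sum_add_distrib, ← sum_mul, hweights, one_mul]

theorem multilinearExt_mono {x : α → ℝ} (hx0 : ∀ i, 0 ≤ x i) (hx1 : ∀ i, x i ≤ 1)
    (s : Finset α) {g g' : Finset α → ℝ} (h : ∀ T, g T ≤ g' T) :
    multilinearExt s x g ≤ multilinearExt s x g' :=
  sum_le_sum fun T _ => mul_le_mul_of_nonneg_left (h T) <|
    mul_nonneg (prod_nonneg fun i _ => hx0 i) (prod_nonneg fun i _ => sub_nonneg.2 (hx1 i))

theorem mul_multilinearExt_add_le {c : ℝ} (hc0 : 0 ≤ c) (hc1 : c ≤ 1) {p q : α → ℝ}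
    (hq0 : ∀ i, 0 ≤ q i) (hq1 : ∀ i, q i ≤ 1) (hp1 : ∀ i, p i ≤ 1) (hcqp : ∀ i, c * q i ≤ p i)
    (s : Finset α) {g : Finset α → ℝ} (hmono : Monotone g) (hsub : IsSubmodular g) :
    c * multilinearExt s q g + (1 - c) * g ∅ ≤ multilinearExt s p g := by
  have hp0 : ∀ i, 0 ≤ p i := fun i => (mul_nonneg hc0 (hq0 i)).trans (hcqp i)
  induction s using Finset.induction_on generalizing g with
  | empty =>
    simp only [multilinearExt, powerset_empty, sum_singleton, empty_sdiff, prod_empty]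
    exact le_of_eq (by ring)
  | insert a s ha ih =>
    set g' : Finset α → ℝ := fun T => g (insert a T)
    rw [multilinearExt_insert ha, multilinearExt_insert ha]
    have ih₀ := ih hmono hsub
    have ih₁ : c * multilinearExt s q g' + (1 - c) * g {a} ≤ multilinearExt s p g' :=
      ih (fun S T h => hmono (insert_subset_insert a h)) (hsub.comp_insert a)
    have hmono_p : multilinearExt s p g ≤ multilinearExt s p g' :=
      multilinearExt_mono hp0 hp1 s fun T => hmono (subset_insert a T)
    -- diminishing returns: adding `a` gains at most `g {a} - g ∅`, whatever `T` is
    have hsub_q : multilinearExt s q g' ≤ multilinearExt s q g + (g {a} - g ∅) := by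
      rw [← multilinearExt_add_const]
      exact multilinearExt_mono hq0 hq1 s fun T => by linarith [hsub.add_insert_le hmono a T]
    have hcq_le : c * q a ≤ 1 := by nlinarith [hq0 a, hq1 a]
    nlinarith [mul_le_mul_of_nonneg_right (hcqp a) (sub_nonneg.2 hmono_p),
      mul_le_mul_of_nonneg_left ih₀ (sub_nonneg.2 hcq_le),
      mul_le_mul_of_nonneg_left ih₁ (mul_nonneg hc0 (hq0 a)),
      mul_le_mul_of_nonneg_left hsub_q (mul_nonneg (mul_nonneg hc0 (hq0 a)) (sub_nonneg.2 hc1))]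

end Finset

theorem chord_le_one_sub_exp_neg {δ t : ℝ} (hδ : 0 < δ) (ht0 : 0 ≤ t) (htδ : t ≤ δ) :
    (1 - exp (-δ)) / δ * t ≤ 1 - exp (-t) := by
  have hconv := convexOn_exp.2 (Set.mem_univ 0) (Set.mem_univ (-δ)) (sub_nonneg.2 ((div_le_one hδ).2 htδ))
    (div_nonneg ht0 hδ.le) (sub_add_cancel 1 (t / δ))
  have hexp : t / δ * -δ = -t := by field_simp
  simp only [smul_eq_mul, mul_zero, exp_zero, mul_one, zero_add, hexp] at hconv
  have hchord : (1 - exp (-δ)) / δ * t = t / δ * (1 - exp (-δ)) := by ring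
  linarith

/-- Poisson rounding loses at most a factor `(1 - e^{-δ})/δ`
for monotone submodular `f` when all probabilities are at most `δ`. -/
theorem stmt_10 (n : ℕ) (f : Finset (Fin n) → ℝ)
    (hnn : ∀ S, 0 ≤ f S)
    (hmono : ∀ S T : Finset (Fin n), S ⊆ T → f S ≤ f T)
    (hsub : ∀ S T : Finset (Fin n), f (S ∪ T) + f (S ∩ T) ≤ f S + f T)
    (q : Fin n → ℝ) (δ : ℝ) (hδ : 0 < δ)
    (hq0 : ∀ i, 0 ≤ q i) (hq1 : ∀ i, q i ≤ 1) (hqδ : ∀ i, q i ≤ δ) :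
    ((1 - Real.exp (-δ)) / δ) *
        ∑ T : Finset (Fin n), (∏ i ∈ T, q i) * (∏ i ∈ Tᶜ, (1 - q i)) * f T
      ≤ ∑ T : Finset (Fin n),
          (∏ i ∈ T, (1 - Real.exp (-(q i)))) * (∏ i ∈ Tᶜ, Real.exp (-(q i))) * f T := by
  set c := (1 - exp (-δ)) / δ
  have hc0 : 0 ≤ c := div_nonneg (sub_nonneg.2 (exp_le_one_iff.2 (by linarith))) hδ.le
  have hc1 : c ≤ 1 := (div_le_one hδ).2 (by linarith [add_one_le_exp (-δ)])
  have hp1 : ∀ i, 1 - exp (-q i) ≤ 1 := fun i => by linarith [exp_pos (-q i)]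
  have key := mul_multilinearExt_add_le hc0 hc1 hq0 hq1 hp1
    (fun i => chord_le_one_sub_exp_neg hδ (hq0 i) (hqδ i)) univ hmono hsub
  simp only [multilinearExt, powerset_univ, ← compl_eq_univ_sdiff, sub_sub_cancel] at key
  linarith [mul_nonneg (sub_nonneg.2 hc1) (hnn ∅)]
end
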